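/- Let N ≥ 1, let L = ((c_i),(θ_j)) ∈ LR^N(ℝ²), let l = ((l_j^a),(l_j^b)) with all l_j^a, l_j^b > 0, and let ((a_i),(b_i)) := P_l(L). If K := max_{1≤j≤N} max(l_j^a, l_j^b) < d_R(L), then ((a_i),(b_i)) satisfies the reflexion condition of a beam: for every 1 ≤ i ≤ N, the four dot products (a_{i−1} − a_i)·n(θ_i), (b_{i−1} − b_i)·n(θ_i), (a_{i+1} − a_i)·n(θ_i), (b_{i+1} − b_i)·n(θ_i) are nonzero and all of the same sign. -/

import Mathlib

open Real Set
open scoped Classical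

noncomputable section

abbrev Pt : Type := EuclideanSpace ℝ (Fin 2)

noncomputable def pt (x y : ℝ) : Pt := (WithLp.equiv 2 (Fin 2 → ℝ)).symm ![x, y]

def dot (u v : Pt) : ℝ := u 0 * v 0 + u 1 * v 1

noncomputable def nvec (θ : Real.Angle) : Pt := pt (-θ.sin) θ.cos

noncomputable def dirvec (θ : Real.Angle) : Pt := pt θ.cos θ.sin

noncomputable def angleOf (v : Pt) : Real.Angle := ((Complex.arg ⟨v 0, v 1⟩ : ℝ) : Real.Angle)

/-- The space of `N`-polygonal chains `(ℝ²)^{N+2}`. -/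
abbrev Chain (N : ℕ) := Fin (N + 2) → Pt

/-- Access the `i`-th point of a chain (junk value `0` out of range). -/
def cg {N : ℕ} (c : Chain N) (i : ℕ) : Pt := if h : i < N + 2 then c ⟨i, h⟩ else 0

/-- The `j`-th ray of a chain: `R_0 = (c_0,c_1]`, `R_j = [c_j, c_{j+1}]`. -/
def ray {N : ℕ} (c : Chain N) (j : ℕ) : Set Pt :=
  if j = 0 then segment ℝ (cg c 0) (cg c 1) \ {cg c 0}
  else segment ℝ (cg c j) (cg c (j + 1))

def Obscured {N : ℕ} (c : Chain N) : Prop :=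
  cg c 0 = cg c 1 ∨
    ∃ j k : ℕ, j ≤ N ∧ 1 ≤ k ∧ k ≤ N + 1 ∧ k ≠ j ∧ k ≠ j + 1 ∧ cg c k ∈ ray c j

def Grazing {N : ℕ} (c : Chain N) : Prop :=
  ∃ i : ℕ, 1 ≤ i ∧ i ≤ N ∧ cg c i ∈ openSegment ℝ (cg c (i - 1)) (cg c (i + 1))

/-- Obscuration-free, non-grazing chains. -/
def LO (N : ℕ) : Set (Chain N) := {c | ¬Obscured c ∧ ¬Grazing c}

/-- Access the angle of the `j`-th mirror, `1 ≤ j ≤ N` (junk out of range). -/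
def θg {N : ℕ} (θ : Fin N → Real.Angle) (j : ℕ) : Real.Angle :=
  if h : j - 1 < N then θ ⟨j - 1, h⟩ else 0

/-- Reflexion condition: at each mirror both adjacent dot products with `n(θ_j)`
are nonzero and of the same sign. -/
def IsReflexive {N : ℕ} (c : Chain N) (θ : Fin N → Real.Angle) : Prop :=
  ∀ j : ℕ, 1 ≤ j → j ≤ N →
    0 < dot (cg c (j + 1) - cg c j) (nvec (θg θ j)) *
        dot (cg c (j - 1) - cg c j) (nvec (θg θ j))

abbrev RChain (N : ℕ) := Chain N × (Fin N → Real.Angle)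

/-- The space of reflexive polygonal chains. -/
def LR (N : ℕ) : Set (RChain N) := {L | L.1 ∈ LO N ∧ IsReflexive L.1 L.2}

/-- The open arc `α + ε·(0,π)` in `ℝ/2πℤ`. -/
def arc (α : Real.Angle) (ε : ℤ) : Set Real.Angle :=
  {β | ∃ s : ℝ, 0 < s ∧ s < π ∧ β = α + (((ε : ℝ) * s : ℝ) : Real.Angle)}

/-- Positive orientation set of the `j`-th mirror. -/
def APlus {N : ℕ} (c : Chain N) (j : ℕ) : Set Real.Angle :=
  arc (angleOf (cg c j - cg c (j - 1))) ((-1) ^ j) ∩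
    arc (angleOf (cg c j - cg c (j + 1))) ((-1) ^ j)

/-- Negative orientation set of the `j`-th mirror. -/
def AMinus {N : ℕ} (c : Chain N) (j : ℕ) : Set Real.Angle :=
  arc (angleOf (cg c j - cg c (j - 1))) ((-1) ^ (j + 1)) ∩
    arc (angleOf (cg c j - cg c (j + 1))) ((-1) ^ (j + 1))

/-- The characteristic: index `j : Fin N` corresponds to the `(j+1)`-st mirror. -/
noncomputable def Car {N : ℕ} (L : RChain N) : Fin N → ℤ :=
  fun j => if θg L.2 (j.1 + 1) ∈ APlus L.1 (j.1 + 1) then 1 else -1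

abbrev Beam (N : ℕ) := Chain N × Chain N

def IsPrimaryBeam {N : ℕ} (F : Beam N) : Prop :=
  (∀ k : ℕ, 1 ≤ k → k ≤ N → cg F.1 k ≠ cg F.2 k) ∧
  cg F.1 0 = pt (-1) 0 ∧ cg F.2 0 = pt (-1) 0 ∧
  cg F.1 (N + 1) = cg F.2 (N + 1) ∧
  midpoint ℝ (cg F.1 1) (cg F.2 1) = pt 0 0

def lineThrough (p q : Pt) : Set Pt := {x | ∃ u : ℝ, x = p + u • (q - p)}

noncomputable def pickPt (S : Set Pt) : Pt := if h : S.Nonempty then h.choose else 0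

noncomputable def pickR (S : Set ℝ) : ℝ := if h : S.Nonempty then h.choose else 0

/-- `impact F t k` is the `(k+1)`-st impact point `P_{k+1}^t` of the `t`-polygonal chain. -/
noncomputable def impact {N : ℕ} (F : Beam N) (t : ℝ) : ℕ → Pt
  | 0 => (1 - t) • cg F.1 1 + t • cg F.2 1
  | k + 1 =>
    let i := k + 2
    let prev := impact F t k
    if (lineThrough (cg F.1 (i - 1)) (cg F.1 i) ∩
        lineThrough (cg F.2 (i - 1)) (cg F.2 i)).Nonempty then
      pickPt (lineThrough prev
          (pickPt (lineThrough (cg F.1 (i - 1)) (cg F.1 i) ∩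
            lineThrough (cg F.2 (i - 1)) (cg F.2 i))) ∩
        segment ℝ (cg F.1 i) (cg F.2 i))
    else
      (1 - pickR {l : ℝ | prev = (1 - l) • cg F.1 (i - 1) + l • cg F.2 (i - 1)}) • cg F.1 i +
        pickR {l : ℝ | prev = (1 - l) • cg F.1 (i - 1) + l • cg F.2 (i - 1)} • cg F.2 i

/-- The `t`-polygonal chain `P_t` of a (primary) beam. -/
noncomputable def tChain {N : ℕ} (F : Beam N) (t : ℝ) : Chain N :=
  fun i => if (i : ℕ) = 0 then impact F t 0 + pt (-1) 0 else impact F t ((i : ℕ) - 1)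

/-- The `k`-th mirror `S_k = [a_k, b_k]` of a beam. -/
def mirror {N : ℕ} (F : Beam N) (k : ℕ) : Set Pt := segment ℝ (cg F.1 k) (cg F.2 k)

def NonObscuration {N : ℕ} (F : Beam N) : Prop :=
  ∀ j : ℕ, j ≤ N → ∀ t ∈ Icc (0 : ℝ) 1, ∀ k : ℕ,
    1 ≤ k → k ≤ N + 1 → k ≠ j → k ≠ j + 1 → ray (tChain F t) j ∩ mirror F k = ∅

/-- Four reals are nonzero and of the same sign. -/
def SameSign₄ (x y z w : ℝ) : Prop := 0 < x * y ∧ 0 < x * z ∧ 0 < x * w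

/-- A unit normal vector to the direction `u`. -/
noncomputable def normalOf (u : Pt) : Pt := ‖u‖⁻¹ • pt (-u 1) (u 0)

def ReflexionCond {N : ℕ} (F : Beam N) : Prop :=
  ∀ i : ℕ, 1 ≤ i → i ≤ N →
    SameSign₄
      (dot (cg F.1 (i - 1) - cg F.1 i) (normalOf (cg F.2 i - cg F.1 i)))
      (dot (cg F.2 (i - 1) - cg F.2 i) (normalOf (cg F.2 i - cg F.1 i)))
      (dot (cg F.1 (i + 1) - cg F.1 i) (normalOf (cg F.2 i - cg F.1 i)))
      (dot (cg F.2 (i + 1) - cg F.2 i) (normalOf (cg F.2 i - cg F.1 i)))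

/-- The space of `N`-beams. -/
def Faisc (N : ℕ) : Set (Beam N) :=
  {F | IsPrimaryBeam F ∧ NonObscuration F ∧ ReflexionCond F}

/-- The centered polygonal chain `M(F) = P_{1/2}`. -/
noncomputable def MF {N : ℕ} (F : Beam N) : Chain N := tChain F (1 / 2)

/-- The reflexive polygonal chain induced by a beam. -/
noncomputable def MR {N : ℕ} (F : Beam N) : RChain N :=
  (MF F, fun j => angleOf (cg F.1 (j.1 + 1) - cg F.2 (j.1 + 1)))

/-- The characteristic of a beam. -/
noncomputable def CarF {N : ℕ} (F : Beam N) : Fin N → ℤ := Car (MR F)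

/-- The pair of polygonal chains `P_l(L)` built from a reflexive chain and mirror
half-lengths `la, lb` (indexed by `1 ≤ j ≤ N`). -/
noncomputable def Pl {N : ℕ} (L : RChain N) (la lb : ℕ → ℝ) : Beam N :=
  (fun i => if 1 ≤ (i : ℕ) ∧ (i : ℕ) ≤ N
      then L.1 i + la (i : ℕ) • dirvec (θg L.2 (i : ℕ)) else L.1 i,
   fun i => if 1 ≤ (i : ℕ) ∧ (i : ℕ) ≤ N
      then L.1 i - lb (i : ℕ) • dirvec (θg L.2 (i : ℕ)) else L.1 i)

/-- Minimal mirror-to-mirror distance of a reflexive chain. -/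
noncomputable def dR {N : ℕ} (L : RChain N) : ℝ :=
  sInf {r | ∃ i : ℕ, 1 ≤ i ∧ i ≤ N ∧
    r = min |dot (cg L.1 (i - 1) - cg L.1 i) (nvec (θg L.2 i))|
          |dot (cg L.1 (i + 1) - cg L.1 i) (nvec (θg L.2 i))|}

/-- Minimal distance from the non-adjacent mirrors to the rays. -/
noncomputable def dO {N : ℕ} (L : RChain N) : ℝ :=
  sInf {r | ∃ j k : ℕ, j ≤ N ∧ 1 ≤ k ∧ k ≤ N + 1 ∧ k ≠ j ∧ k ≠ j + 1 ∧
    r = Metric.infDist (cg L.1 k) (ray L.1 j)}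

/-- `K = max_{1 ≤ j ≤ N} max (la j) (lb j)`. -/
noncomputable def Kmax (N : ℕ) (la lb : ℕ → ℝ) : ℝ :=
  sSup {r | ∃ j : ℕ, 1 ≤ j ∧ j ≤ N ∧ r = max (la j) (lb j)}

/-- The subbeam `F_μ` of a beam. -/
noncomputable def subBeam {N : ℕ} (F : Beam N) (μ : ℝ) : Beam N :=
  (fun i => if (i : ℕ) = 0 then pt (-1) 0 else tChain F ((1 - μ) / 2) i,
   fun i => if (i : ℕ) = 0 then pt (-1) 0 else tChain F ((1 + μ) / 2) i)
lemma dot_add_left' (u v w : Pt) : dot (u + v) w = dot u w + dot v w := by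
  simp [dot]; ring

lemma dot_sub_left' (u v w : Pt) : dot (u - v) w = dot u w - dot v w := by
  simp [dot]; ring

lemma dot_neg_left' (u w : Pt) : dot (-u) w = -dot u w := by
  simp [dot]; ring

lemma dot_smul_left' (l : ℝ) (u w : Pt) : dot (l • u) w = l * dot u w := by
  simp [dot]; ring

lemma dot_zero_left' (w : Pt) : dot 0 w = 0 := by simp [dot]

lemma dot_dirvec_nvec (θ : Real.Angle) : dot (dirvec θ) (nvec θ) = 0 := by
  simp [dot, dirvec, nvec, pt]; ring

lemma abs_dot_dirvec_nvec_le (α β : Real.Angle) : |dot (dirvec α) (nvec β)| ≤ 1 := by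
  have h1 := Real.Angle.cos_sq_add_sin_sq α
  have h2 := Real.Angle.cos_sq_add_sin_sq β
  simp only [dot, dirvec, nvec, pt, WithLp.equiv_symm_apply, PiLp.toLp_apply, Matrix.cons_val_zero,
    Matrix.cons_val_one, Matrix.head_cons]
  rw [abs_le]
  constructor <;>
    nlinarith [sq_nonneg (α.cos * β.cos + α.sin * β.sin),
      sq_nonneg (α.cos * β.sin - α.sin * β.cos), sq_nonneg (α.cos * β.sin + α.sin * β.cos)]

lemma samesign_aux (X1 X2 e1 e2 e3 e4 m : ℝ) (hX : 0 < X2 * X1)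
    (hm1 : m ≤ |X1|) (hm2 : m ≤ |X2|)
    (h1 : |e1| < m) (h2 : |e2| < m) (h3 : |e3| < m) (h4 : |e4| < m) :
    SameSign₄ (X1 + e1) (X1 + e2) (X2 + e3) (X2 + e4) := by
  rw [abs_lt] at h1 h2 h3 h4
  rcases lt_trichotomy X1 0 with h | h | h
  · have hX2 : X2 < 0 := by nlinarith
    rw [abs_of_neg h] at hm1; rw [abs_of_neg hX2] at hm2
    refine ⟨by nlinarith, by nlinarith, by nlinarith⟩
  · subst h; simp at hX
  · have hX2 : 0 < X2 := by nlinarith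
    rw [abs_of_pos h] at hm1; rw [abs_of_pos hX2] at hm2
    refine ⟨by nlinarith, by nlinarith, by nlinarith⟩

/-- if `K < d_R(L)` then `P_l(L)` satisfies the reflexion
condition of a beam. -/
theorem statement11 (N : ℕ) (hN : 1 ≤ N) (L : RChain N) (hL : L ∈ LR N)
    (la lb : ℕ → ℝ)
    (hla : ∀ j : ℕ, 1 ≤ j → j ≤ N → 0 < la j)
    (hlb : ∀ j : ℕ, 1 ≤ j → j ≤ N → 0 < lb j)
    (hK : Kmax N la lb < dR L) :
    ∀ i : ℕ, 1 ≤ i → i ≤ N →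
      SameSign₄
        (dot (cg (Pl L la lb).1 (i - 1) - cg (Pl L la lb).1 i) (nvec (θg L.2 i)))
        (dot (cg (Pl L la lb).2 (i - 1) - cg (Pl L la lb).2 i) (nvec (θg L.2 i)))
        (dot (cg (Pl L la lb).1 (i + 1) - cg (Pl L la lb).1 i) (nvec (θg L.2 i)))
        (dot (cg (Pl L la lb).2 (i + 1) - cg (Pl L la lb).2 i) (nvec (θg L.2 i))) := by
  obtain ⟨hLO, hRef⟩ := hL
  intro i hi1 hiN
  have hi2 : i < N + 2 := by omega
  have him : i - 1 < N + 2 := by omega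
  have hip : i + 1 < N + 2 := by omega
  -- bound from dR
  have hdR : dR L ≤ min |dot (cg L.1 (i - 1) - cg L.1 i) (nvec (θg L.2 i))|
      |dot (cg L.1 (i + 1) - cg L.1 i) (nvec (θg L.2 i))| := by
    apply csInf_le
    · exact ⟨0, by rintro r ⟨j, hj1, hjN, rfl⟩; positivity⟩
    · exact ⟨i, hi1, hiN, rfl⟩
  -- bound from Kmax
  have hBdd : BddAbove {r | ∃ j : ℕ, 1 ≤ j ∧ j ≤ N ∧ r = max (la j) (lb j)} := by
    apply Set.Finite.bddAbove
    apply ((Set.finite_Icc 1 N).image fun j => max (la j) (lb j)).subset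
    rintro r ⟨j, hj1, hjN, rfl⟩
    exact ⟨j, ⟨hj1, hjN⟩, rfl⟩
  have hKj : ∀ j : ℕ, 1 ≤ j → j ≤ N → max (la j) (lb j) ≤ Kmax N la lb := fun j h1 h2 =>
    le_csSup hBdd ⟨j, h1, h2, rfl⟩
  have h0K : 0 < Kmax N la lb :=
    lt_of_lt_of_le (hla i hi1 hiN) ((le_max_left _ _).trans (hKj i hi1 hiN))
  have hdRpos : 0 < dR L := h0K.trans hK
  -- shift formulas
  have hshiftA : ∀ j : ℕ, j < N + 2 →
      cg (Pl L la lb).1 j = cg L.1 j +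
        (if 1 ≤ j ∧ j ≤ N then la j • dirvec (θg L.2 j) else 0) := by
    intro j hj
    simp only [cg, Pl, dif_pos hj]
    split_ifs <;> simp
  have hshiftB : ∀ j : ℕ, j < N + 2 →
      cg (Pl L la lb).2 j = cg L.1 j -
        (if 1 ≤ j ∧ j ≤ N then lb j • dirvec (θg L.2 j) else 0) := by
    intro j hj
    simp only [cg, Pl, dif_pos hj]
    split_ifs <;> simp
  -- epsilon bounds
  have hepsA : ∀ j : ℕ, j < N + 2 →
      |dot (cg (Pl L la lb).1 j - cg L.1 j) (nvec (θg L.2 i))| < dR L := by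
    intro j hj
    rw [hshiftA j hj, add_sub_cancel_left]
    split_ifs with h
    · rw [dot_smul_left', abs_mul, abs_of_pos (hla j h.1 h.2)]
      refine lt_of_le_of_lt ?_ hK
      calc la j * |dot (dirvec (θg L.2 j)) (nvec (θg L.2 i))| ≤ la j * 1 :=
            mul_le_mul_of_nonneg_left (abs_dot_dirvec_nvec_le _ _) (hla j h.1 h.2).le
        _ = la j := mul_one _
        _ ≤ Kmax N la lb := (le_max_left _ _).trans (hKj j h.1 h.2)
    · simpa [dot_zero_left'] using hdRpos
  have hepsB : ∀ j : ℕ, j < N + 2 →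
      |dot (cg (Pl L la lb).2 j - cg L.1 j) (nvec (θg L.2 i))| < dR L := by
    intro j hj
    rw [hshiftB j hj, sub_sub_cancel_left, dot_neg_left', abs_neg]
    split_ifs with h
    · rw [dot_smul_left', abs_mul, abs_of_pos (hlb j h.1 h.2)]
      refine lt_of_le_of_lt ?_ hK
      calc lb j * |dot (dirvec (θg L.2 j)) (nvec (θg L.2 i))| ≤ lb j * 1 :=
            mul_le_mul_of_nonneg_left (abs_dot_dirvec_nvec_le _ _) (hlb j h.1 h.2).le
        _ = lb j := mul_one _
        _ ≤ Kmax N la lb := (le_max_right _ _).trans (hKj j h.1 h.2)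
    · simpa [dot_zero_left'] using hdRpos
  -- center shifts are orthogonal
  have hAi : dot (cg (Pl L la lb).1 i - cg L.1 i) (nvec (θg L.2 i)) = 0 := by
    rw [hshiftA i hi2, add_sub_cancel_left, if_pos ⟨hi1, hiN⟩, dot_smul_left',
      dot_dirvec_nvec, mul_zero]
  have hBi : dot (cg (Pl L la lb).2 i - cg L.1 i) (nvec (θg L.2 i)) = 0 := by
    rw [hshiftB i hi2, sub_sub_cancel_left, dot_neg_left', if_pos ⟨hi1, hiN⟩,
      dot_smul_left', dot_dirvec_nvec, mul_zero, neg_zero]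
  -- decompositions of the four dot products
  have hdecA : ∀ j : ℕ,
      dot (cg (Pl L la lb).1 j - cg (Pl L la lb).1 i) (nvec (θg L.2 i)) =
        dot (cg L.1 j - cg L.1 i) (nvec (θg L.2 i)) +
          dot (cg (Pl L la lb).1 j - cg L.1 j) (nvec (θg L.2 i)) := by
    intro j
    have h : cg (Pl L la lb).1 j - cg (Pl L la lb).1 i =
        (cg L.1 j - cg L.1 i) + (cg (Pl L la lb).1 j - cg L.1 j) -
          (cg (Pl L la lb).1 i - cg L.1 i) := by abel
    rw [h, dot_sub_left', dot_add_left', hAi, sub_zero]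
  have hdecB : ∀ j : ℕ,
      dot (cg (Pl L la lb).2 j - cg (Pl L la lb).2 i) (nvec (θg L.2 i)) =
        dot (cg L.1 j - cg L.1 i) (nvec (θg L.2 i)) +
          dot (cg (Pl L la lb).2 j - cg L.1 j) (nvec (θg L.2 i)) := by
    intro j
    have h : cg (Pl L la lb).2 j - cg (Pl L la lb).2 i =
        (cg L.1 j - cg L.1 i) + (cg (Pl L la lb).2 j - cg L.1 j) -
          (cg (Pl L la lb).2 i - cg L.1 i) := by abel
    rw [h, dot_sub_left', dot_add_left', hBi, sub_zero]
  rw [hdecA (i - 1), hdecB (i - 1), hdecA (i + 1), hdecB (i + 1)]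
  exact samesign_aux _ _ _ _ _ _ (dR L) (hRef i hi1 hiN)
    (hdR.trans (min_le_left _ _)) (hdR.trans (min_le_right _ _))
    (hepsA _ him) (hepsB _ him) (hepsA _ hip) (hepsB _ hip)
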